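/- arXiv:1501.07301 — 4 statements merged into one kernel-verified Lean document; each statement's English description precedes it below -/
import Mathlib

section
/- Let p(X₁,…,Xₙ) = a₁X₁ + ⋯ + aₙXₙ (with n ≥ 1) be a homogeneous linear pattern admitted by ℤ₊, and let S be a numerical semigroup. Then p(S) is a numerical semigroup if and only if gcd(a₁,…,aₙ) = 1. -/
/-!
The gcd `d` of the coefficients divides every value of the pattern, so if `p(S)` contains all
large integers then `d = 1`. Conversely, by Abel summation the pattern takes the value
`∑ⱼ bⱼ tⱼ` at the tail sums `sᵢ = tᵢ + ⋯ + tₙ` of a nonnegative sequence `t`, where the prefix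
sums `bⱼ = a₁ + ⋯ + aⱼ` are nonnegative (admissibility at the indicator of `{1, …, j}`) and
have the same gcd as the `aᵢ`. Taking `tⱼ = N + cⱼ` with `N` at least the conductor of `S`
puts every `sᵢ` in `S`, and when `d = 1` the coin problem for the `bⱼ` makes `∑ⱼ cⱼ bⱼ` reach
every large integer.
-/

open Finset

/-- A numerical semigroup: a set of nonnegative integers containing 0, closed under
addition, with finite complement in ℤ₊. -/
def IsNumericalSemigroup (S : Set ℤ) : Prop :=
  (0 : ℤ) ∈ S ∧ (∀ s ∈ S, 0 ≤ s) ∧ (∀ a ∈ S, ∀ b ∈ S, a + b ∈ S) ∧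
    {z : ℤ | 0 ≤ z ∧ z ∉ S}.Finite

/-- An ideal of a numerical semigroup `S`: a nonempty subset `I ⊆ S` with `I + S ⊆ I`. -/
def IsIdealOf (I S : Set ℤ) : Prop :=
  I.Nonempty ∧ I ⊆ S ∧ ∀ x ∈ I, ∀ s ∈ S, x + s ∈ I

/-- The image of the set `A` under the linear pattern `a₁X₁+⋯+aₙXₙ+a₀`:
values on non-increasing sequences of elements of `A`. -/
def patternImage {n : ℕ} (a : Fin n → ℤ) (a₀ : ℤ) (A : Set ℤ) : Set ℤ :=
  {y : ℤ | ∃ s : Fin n → ℤ, Antitone s ∧ (∀ i, s i ∈ A) ∧ y = ∑ i, a i * s i + a₀}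

/-- The linear pattern `a₁X₁+⋯+aₙXₙ+a₀` is admitted by the ideal `I` with codomain `S`:
on every non-increasing sequence of elements of `I` it takes a value in `S`. -/
def AdmittedBy {n : ℕ} (a : Fin n → ℤ) (a₀ : ℤ) (I S : Set ℤ) : Prop :=
  ∀ s : Fin n → ℤ, Antitone s → (∀ i, s i ∈ I) → ∑ i, a i * s i + a₀ ∈ S

/-- A linear pattern is premonic if some initial partial sum of its coefficients equals 1. -/
def Premonic {n : ℕ} (a : Fin n → ℤ) : Prop :=
  ∃ k : ℕ, 1 ≤ k ∧ k ≤ n ∧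
    ∑ i ∈ Finset.univ.filter (fun i : Fin n => (i : ℕ) < k), a i = 1

lemma setOf_nonneg_notMem_finite_iff {X : Set ℤ} :
    {z : ℤ | 0 ≤ z ∧ z ∉ X}.Finite ↔ ∃ M, ∀ z ≥ M, z ∈ X := by
  constructor
  · intro h
    obtain ⟨ub, hub⟩ := h.bddAbove
    refine ⟨max ub 0 + 1, fun z hz => ?_⟩
    by_contra hzX
    have : z ≤ ub := hub ⟨by omega, hzX⟩
    omega
  · rintro ⟨M, hM⟩
    refine (Set.finite_Ico 0 M).subset fun z ⟨hz0, hzX⟩ => ⟨hz0, ?_⟩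
    by_contra! hz
    exact hzX (hM z hz)

/-- Schur's theorem on the Frobenius coin problem, over `ℤ`. -/
theorem exists_forall_ge_eq_sum_nat_mul {ι : Type*} [Fintype ι] (b : ι → ℤ)
    (hb : ∀ i, 0 ≤ b i) (hgcd : univ.gcd b = 1) :
    ∃ M, ∀ m ≥ M, ∃ c : ι → ℕ, ∑ i, (c i : ℤ) * b i = m := by
  set s := Set.range fun i => (b i).toNat
  have hs : Nat.setGcd s = 1 := by
    rw [← Nat.dvd_one, ← Int.natCast_dvd_natCast, Nat.cast_one, ← hgcd]
    refine Finset.dvd_gcd fun i _ => ?_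
    have := Nat.setGcd_dvd_of_mem (Set.mem_range_self i : (b i).toNat ∈ s)
    rwa [← Int.natCast_dvd_natCast, Int.toNat_of_nonneg (hb i)] at this
  obtain ⟨M, hM⟩ := Nat.exists_mem_closure_of_ge s
  refine ⟨M, fun m hm => ?_⟩
  lift m to ℕ using by omega
  have hmem := hM m (by omega) (hs ▸ one_dvd m)
  rw [← Submodule.span_nat_eq_addSubmonoidClosure, Submodule.mem_toAddSubmonoid,
    Submodule.mem_span_range_iff_exists_fun] at hmem
  obtain ⟨c, hc⟩ := hmem
  refine ⟨c, ?_⟩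
  rw [← hc]
  push_cast
  exact Finset.sum_congr rfl fun i _ => by
    rw [smul_eq_mul, Nat.cast_mul, Int.toNat_of_nonneg (hb i)]

theorem sum_mul_sum_Ici_eq {ι : Type*} [Fintype ι] [Preorder ι] [LocallyFiniteOrderBot ι]
    [LocallyFiniteOrderTop ι] (a t : ι → ℤ) :
    ∑ i, a i * ∑ j ∈ Ici i, t j = ∑ j, (∑ i ∈ Iic j, a i) * t j := by
  simp_rw [Finset.mul_sum, Finset.sum_mul]
  exact Finset.sum_comm' fun i j => by simp

theorem antitone_sum_Ici {ι : Type*} [Preorder ι] [LocallyFiniteOrderTop ι] {t : ι → ℤ}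
    (ht : ∀ j, 0 ≤ t j) :
    Antitone fun i => ∑ j ∈ Ici i, t j :=
  fun _ _ hij => Finset.sum_le_sum_of_subset_of_nonneg (Finset.Ici_subset_Ici.mpr hij)
    fun j _ _ => ht j

theorem le_sum_Ici {ι : Type*} [Preorder ι] [LocallyFiniteOrderTop ι] {t : ι → ℤ}
    (ht : ∀ j, 0 ≤ t j) (i : ι) : t i ≤ ∑ j ∈ Ici i, t j :=
  Finset.single_le_sum (fun j _ => ht j) (Finset.mem_Ici.mpr le_rfl)

theorem dvd_of_forall_dvd_sum_Iic {ι : Type*} [Finite ι] [PartialOrder ι]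
    [LocallyFiniteOrderBot ι] {a : ι → ℤ} {d : ℤ} (h : ∀ j, d ∣ ∑ i ∈ Iic j, a i)
    (i : ι) : d ∣ a i := by
  induction i using WellFoundedLT.induction with
  | _ i ih =>
    have hsplit : ∑ j ∈ Iic i, a j = a i + ∑ j ∈ Iio i, a j := by
      rw [Finset.Iic_eq_cons_Iio, Finset.sum_cons]
    exact (dvd_add_left (Finset.dvd_sum fun j hj => ih j (Finset.mem_Iio.mp hj))).mp
      (hsplit ▸ h i)

theorem gcd_sum_Iic {ι : Type*} [Fintype ι] [PartialOrder ι] [LocallyFiniteOrderBot ι]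
    (a : ι → ℤ) : univ.gcd (fun j => ∑ i ∈ Iic j, a i) = univ.gcd a :=
  dvd_antisymm_of_normalize_eq Finset.normalize_gcd Finset.normalize_gcd
    (Finset.dvd_gcd fun i _ => dvd_of_forall_dvd_sum_Iic
      (fun j => Finset.gcd_dvd (f := fun k => ∑ i ∈ Iic k, a i) (Finset.mem_univ j)) i)
    (Finset.dvd_gcd fun _ _ => Finset.dvd_sum fun i _ => Finset.gcd_dvd (Finset.mem_univ i))

theorem gcd_eq_one_of_forall_ge_dvd {ι : Type*} {s : Finset ι} {f : ι → ℤ} {M : ℤ}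
    (h : ∀ z ≥ M, s.gcd f ∣ z) : s.gcd f = 1 := by
  have h1 : s.gcd f ∣ 1 := by simpa using dvd_sub (h (M + 1) (by omega)) (h M le_rfl)
  rw [← Finset.normalize_gcd]
  exact normalize_eq_one.mpr (isUnit_of_dvd_one h1)

section PatternImage

variable {n : ℕ} {a : Fin n → ℤ} {A : Set ℤ}

theorem zero_mem_patternImage (h0 : 0 ∈ A) : 0 ∈ patternImage a 0 A :=
  ⟨0, antitone_const, fun _ => h0, by simp⟩

theorem add_mem_patternImage (hA : ∀ x ∈ A, ∀ y ∈ A, x + y ∈ A) {x y : ℤ}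
    (hx : x ∈ patternImage a 0 A) (hy : y ∈ patternImage a 0 A) :
    x + y ∈ patternImage a 0 A := by
  obtain ⟨s, hs, hsA, rfl⟩ := hx
  obtain ⟨t, ht, htA, rfl⟩ := hy
  refine ⟨s + t, hs.add ht, fun i => hA _ (hsA i) _ (htA i), ?_⟩
  simp only [Pi.add_apply, mul_add, Finset.sum_add_distrib, add_zero]

theorem gcd_dvd_of_mem_patternImage {y : ℤ} (hy : y ∈ patternImage a 0 A) :
    univ.gcd a ∣ y := by
  obtain ⟨s, -, -, rfl⟩ := hy
  rw [add_zero]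
  exact Finset.dvd_sum fun i _ => (Finset.gcd_dvd (Finset.mem_univ i)).mul_right _

theorem sum_Iic_nonneg
    (hadm : ∀ s : Fin n → ℤ, Antitone s → (∀ i, 0 ≤ s i) → 0 ≤ ∑ i, a i * s i) (j : Fin n) :
    0 ≤ ∑ i ∈ Iic j, a i := by
  have hindicator : Antitone fun i : Fin n => if i ≤ j then (1 : ℤ) else 0 := by
    intro i₁ i₂ h
    by_cases h₂ : i₂ ≤ j
    · simp [h₂, h.trans h₂]
    · simp only [if_neg h₂]
      split_ifs <;> norm_num
  have := hadm _ hindicator fun i => by split_ifs <;> norm_num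
  simpa [Finset.sum_ite, Finset.filter_ge_eq_Iic] using this

theorem exists_forall_ge_mem_patternImage
    (hadm : ∀ s : Fin n → ℤ, Antitone s → (∀ i, 0 ≤ s i) → 0 ≤ ∑ i, a i * s i)
    (hgcd : univ.gcd a = 1) (hA : ∃ N, ∀ z ≥ N, z ∈ A) :
    ∃ M, ∀ z ≥ M, z ∈ patternImage a 0 A := by
  obtain ⟨N, hN⟩ := hA
  set b : Fin n → ℤ := fun j => ∑ i ∈ Iic j, a i
  obtain ⟨M, hM⟩ := exists_forall_ge_eq_sum_nat_mul b (sum_Iic_nonneg hadm)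
    (by rw [gcd_sum_Iic, hgcd])
  set N' := max N 0
  refine ⟨M + N' * ∑ j, b j, fun z hz => ?_⟩
  obtain ⟨c, hc⟩ := hM (z - N' * ∑ j, b j) (by linarith)
  set t : Fin n → ℤ := fun j => c j + N'
  have ht : ∀ j, N' ≤ t j := fun j => by simp [t]
  have ht0 : ∀ j, 0 ≤ t j := fun j => le_trans (le_max_right _ _) (ht j)
  refine ⟨fun i => ∑ j ∈ Ici i, t j, antitone_sum_Ici ht0,
    fun i => hN _ ((le_max_left _ _).trans ((ht i).trans (le_sum_Ici ht0 i))), ?_⟩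
  calc z = ∑ j, (c j : ℤ) * b j + N' * ∑ j, b j := by rw [hc]; ring
    _ = ∑ j, b j * t j := by
      rw [Finset.mul_sum, ← Finset.sum_add_distrib]
      exact Finset.sum_congr rfl fun j _ => by ring
    _ = ∑ i, a i * ∑ j ∈ Ici i, t j + 0 := by rw [sum_mul_sum_Ici_eq, add_zero]

end PatternImage

theorem stmt2_general {n : ℕ} (a : Fin n → ℤ)
    (hadm : ∀ s : Fin n → ℤ, Antitone s → (∀ i, 0 ≤ s i) → 0 ≤ ∑ i, a i * s i)
    (S : Set ℤ) (hS : IsNumericalSemigroup S) :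
    IsNumericalSemigroup (patternImage a 0 S) ↔ Finset.univ.gcd a = 1 := by
  obtain ⟨h0S, hSnonneg, hSadd, hScofin⟩ := hS
  rw [setOf_nonneg_notMem_finite_iff] at hScofin
  constructor
  · rintro ⟨-, -, -, hcofin⟩
    obtain ⟨M, hM⟩ := setOf_nonneg_notMem_finite_iff.mp hcofin
    exact gcd_eq_one_of_forall_ge_dvd fun z hz => gcd_dvd_of_mem_patternImage (hM z hz)
  · intro hgcd
    refine ⟨zero_mem_patternImage h0S, ?_, fun x hx y hy => add_mem_patternImage hSadd hx hy,
      setOf_nonneg_notMem_finite_iff.mpr (exists_forall_ge_mem_patternImage hadm hgcd hScofin)⟩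
    rintro y ⟨s, hs, hsS, rfl⟩
    simpa using hadm s hs fun i => hSnonneg _ (hsS i)

/-- If the homogeneous linear pattern `a₁X₁+⋯+aₙXₙ` is admitted by ℤ₊ and `S` is a
numerical semigroup, then `p(S)` is a numerical semigroup iff `gcd(a₁,…,aₙ) = 1`. -/
theorem stmt2 {n : ℕ} (hn : 0 < n) (a : Fin n → ℤ)
    (hadm : ∀ s : Fin n → ℤ, Antitone s → (∀ i, 0 ≤ s i) → 0 ≤ ∑ i, a i * s i)
    (S : Set ℤ) (hS : IsNumericalSemigroup S) :
    IsNumericalSemigroup (patternImage a 0 S) ↔ Finset.univ.gcd a = 1 :=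
  stmt2_general a hadm S hS
end

section
/- If p(X₁,…,Xₙ) = a₁X₁ + ⋯ + aₙXₙ + a₀ is a linear pattern admitted by a proper ideal I of a numerical semigroup S, then a₁ + ⋯ + a_{n'} ≥ 0 for every 1 ≤ n' ≤ n, and moreover (a₁ + ⋯ + aₙ)·μ(I) + a₀ ≥ 0, where μ(I) = min I (equivalently, a₁ + ⋯ + aₙ ≥ max(0, −a₀/μ(I))). -/
open Finset

/-!
Evaluate the pattern on the non-increasing sequence `μ + t, …, μ + t, μ, …, μ` (the first `k`
terms raised by `t ∈ S`, which lies in `I` since `I + S ⊆ I`). Its value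
`(∑ aᵢ) μ + a₀ + (a₁ + ⋯ + aₖ) t` lies in `S` and so is nonnegative. For `t = 0` this is the
second claim; and since `S` contains arbitrarily large `t`, a negative partial sum
`a₁ + ⋯ + aₖ` would make the value negative.
-/

theorem IsNumericalSemigroup.exists_mem_ge {S : Set ℤ} (hS : IsNumericalSemigroup S) (m : ℤ) :
    ∃ t ∈ S, m ≤ t := by
  obtain ⟨b, hb⟩ := hS.2.2.2.bddAbove
  refine ⟨max (max m 0) (b + 1), ?_, (le_max_left _ _).trans (le_max_left _ _)⟩
  by_contra hnotin
  have hle : max (max m 0) (b + 1) ≤ b := hb ⟨by positivity, hnotin⟩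
  omega

theorem antitone_add_ite_lt {n : ℕ} (μ t : ℤ) (k : ℕ) (ht : 0 ≤ t) :
    Antitone fun i : Fin n => μ + if (i : ℕ) < k then t else 0 := by
  intro i j hij
  have hij' : (i : ℕ) ≤ j := hij
  by_cases hj : (j : ℕ) < k
  · simp [hj, hij'.trans_lt hj]
  · dsimp only
    split_ifs <;> omega

theorem sum_mul_add_ite_lt {n : ℕ} (a : Fin n → ℤ) (μ t : ℤ) (k : ℕ) :
    ∑ i, a i * (μ + if (i : ℕ) < k then t else 0) =
      (∑ i, a i) * μ + (∑ i ∈ univ.filter (fun i : Fin n => (i : ℕ) < k), a i) * t := by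
  simp only [mul_add, sum_add_distrib, sum_mul, sum_filter, mul_ite, ite_mul, mul_zero,
    zero_mul]

namespace AdmittedBy

variable {n : ℕ} {a : Fin n → ℤ} {a₀ : ℤ} {I S : Set ℤ}

theorem eval_nonneg (hadm : AdmittedBy a a₀ I S) (hS : IsNumericalSemigroup S)
    {s : Fin n → ℤ} (hanti : Antitone s) (hsI : ∀ i, s i ∈ I) :
    0 ≤ ∑ i, a i * s i + a₀ :=
  hS.2.1 _ (hadm s hanti hsI)

theorem sum_mul_add_nonneg (hadm : AdmittedBy a a₀ I S) (hS : IsNumericalSemigroup S)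
    {μ : ℤ} (hμ : μ ∈ I) : 0 ≤ (∑ i, a i) * μ + a₀ := by
  simpa only [sum_mul] using hadm.eval_nonneg hS (fun _ _ _ => le_rfl) fun _ => hμ

theorem partialSum_nonneg (hadm : AdmittedBy a a₀ I S) (hS : IsNumericalSemigroup S)
    (hI : IsIdealOf I S) {μ : ℤ} (hμ : μ ∈ I) (k : ℕ) :
    0 ≤ ∑ i ∈ univ.filter (fun i : Fin n => (i : ℕ) < k), a i := by
  by_contra! hneg
  obtain ⟨t, htS, ht⟩ := hS.exists_mem_ge ((∑ i, a i) * μ + a₀ + 1)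
  have hval := hadm.eval_nonneg hS (antitone_add_ite_lt μ t k (hS.2.1 t htS)) fun i => by
    split_ifs
    · exact hI.2.2 μ hμ t htS
    · simpa using hμ
  rw [sum_mul_add_ite_lt] at hval
  nlinarith [hS.2.1 t htS]

end AdmittedBy

theorem stmt7_general {n : ℕ} (a : Fin n → ℤ) (a₀ : ℤ) (S I : Set ℤ) (μ : ℤ)
    (hS : IsNumericalSemigroup S) (hI : IsIdealOf I S)
    (hμ : IsLeast I μ) (hadm : AdmittedBy a a₀ I S) :
    (∀ k : ℕ, 1 ≤ k → k ≤ n →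
        0 ≤ ∑ i ∈ Finset.univ.filter (fun i : Fin n => (i : ℕ) < k), a i) ∧
    0 ≤ (∑ i, a i) * μ + a₀ :=
  ⟨fun k _ _ => hadm.partialSum_nonneg hS hI hμ.1 k, hadm.sum_mul_add_nonneg hS hμ.1⟩

/-- If a linear pattern is admitted by a proper ideal `I` of a numerical semigroup
`S`, then all initial partial sums of coefficients are nonnegative and
`(∑ aᵢ)·μ(I) + a₀ ≥ 0` where `μ(I) = min I`. -/
theorem stmt7 {n : ℕ} (a : Fin n → ℤ) (a₀ : ℤ) (S I : Set ℤ) (μ : ℤ)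
    (hS : IsNumericalSemigroup S) (hI : IsIdealOf I S) (hproper : I ≠ S)
    (hμ : IsLeast I μ) (hadm : AdmittedBy a a₀ I S) :
    (∀ k : ℕ, 1 ≤ k → k ≤ n →
        0 ≤ ∑ i ∈ Finset.univ.filter (fun i : Fin n => (i : ℕ) < k), a i) ∧
    0 ≤ (∑ i, a i) * μ + a₀ :=
  stmt7_general a a₀ S I μ hS hI hμ hadm
end

section
/- Let I and J be ideals of a numerical semigroup S with J proper, and let μ(J) = min J. Then there exists d₀ ≥ 1 such that for all d ≥ d₀ the set PF^d(I,J) is finite with exactly μ(J) elements. -/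
open Finset

open Pointwise

/-- The `d`-fold sumset `dJ`, with `0J = {0}`. -/
def foldSum (J : Set ℤ) : ℕ → Set ℤ
  | 0 => {0}
  | d + 1 => foldSum J d + J

/-- `PF^d(I,J) = (I − dJ) \ (I − (d−1)J)`. -/
def PFset (I J : Set ℤ) (d : ℕ) : Set ℤ :=
  {z : ℤ | ∀ k ∈ foldSum J d, z + k ∈ I} \
    {z : ℤ | ∀ k ∈ foldSum J (d - 1), z + k ∈ I}


/-! Write `J = μ + J₀` with `J₀ = J − μ ∋ 0`. As `J₀` contains every large integer, the
sumsets `dJ₀` increase to a set `F` that is reached after finitely many steps, and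
`F + μ ⊆ F` because `μ ∈ J₀`. Hence for large `d`, `(I − dJ) = (I − F) − dμ`, so `PF^d(I,J)`
is a translate of the Apéry set `{u ∈ U | u − μ ∉ U}` of `U = I − F`. Since `U` is bounded
below, closed under adding `μ` and contains every large integer, this Apéry set meets each
residue class mod `μ` exactly once; and `μ > 0` because `J` is proper. -/

namespace IsIdealOf

lemma eq_of_zero_mem {I S : Set ℤ} (hI : IsIdealOf I S) (h0 : (0 : ℤ) ∈ I) : I = S :=
  hI.2.1.antisymm fun s hs => by simpa using hI.2.2 0 h0 s hs

lemma nonneg {I S : Set ℤ} (hS : IsNumericalSemigroup S) (hI : IsIdealOf I S) {x : ℤ}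
    (hx : x ∈ I) : 0 ≤ x :=
  hS.2.1 x (hI.2.1 hx)

end IsIdealOf

lemma IsNumericalSemigroup.exists_forall_ge_mem {S : Set ℤ} (hS : IsNumericalSemigroup S) :
    ∃ N, ∀ z, N ≤ z → z ∈ S := by
  obtain ⟨b, hb⟩ := hS.2.2.2.bddAbove
  refine ⟨max b 0 + 1, fun z hz => ?_⟩
  by_contra hzS
  have := hb (show z ∈ {z : ℤ | 0 ≤ z ∧ z ∉ S} from ⟨by omega, hzS⟩)
  omega

lemma IsIdealOf.exists_forall_ge_mem {I S : Set ℤ} (hS : IsNumericalSemigroup S)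
    (hI : IsIdealOf I S) : ∃ N, ∀ z, N ≤ z → z ∈ I := by
  obtain ⟨N, hN⟩ := hS.exists_forall_ge_mem
  obtain ⟨x, hx⟩ := hI.1
  exact ⟨x + N, fun z hz => by simpa using hI.2.2 x hx (z - x) (hN _ (by omega))⟩

section foldSum

variable {A : Set ℤ}

lemma zero_mem_foldSum (h0 : (0 : ℤ) ∈ A) : ∀ d, (0 : ℤ) ∈ foldSum A d
  | 0 => rfl
  | d + 1 => ⟨0, zero_mem_foldSum h0 d, 0, h0, add_zero 0⟩

lemma foldSum_nonneg (hA : ∀ a ∈ A, 0 ≤ a) : ∀ d, ∀ x ∈ foldSum A d, 0 ≤ x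
  | 0, _, rfl => le_rfl
  | d + 1, _, ⟨a, ha, b, hb, rfl⟩ => add_nonneg (foldSum_nonneg hA d a ha) (hA b hb)

lemma foldSum_monotone (h0 : (0 : ℤ) ∈ A) : Monotone (foldSum A) :=
  monotone_nat_of_le_succ fun _ x hx => ⟨x, hx, 0, h0, add_zero x⟩

lemma subset_foldSum (h0 : (0 : ℤ) ∈ A) {d : ℕ} (hd : 1 ≤ d) : A ⊆ foldSum A d :=
  fun a ha => foldSum_monotone h0 hd ⟨0, rfl, a, ha, zero_add a⟩

lemma mem_foldSum_iff_sub_mem (J : Set ℤ) (μ : ℤ) :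
    ∀ (d : ℕ) (x : ℤ), x ∈ foldSum J d ↔ x - d * μ ∈ foldSum {y | y + μ ∈ J} d
  | 0, x => by simp [foldSum]
  | d + 1, x => by
    constructor
    · rintro ⟨a, ha, b, hb, rfl⟩
      refine ⟨a - d * μ, (mem_foldSum_iff_sub_mem J μ d a).1 ha, b - μ, by simpa using hb, ?_⟩
      push_cast
      ring
    · rintro ⟨a, ha, b, hb, hab⟩
      refine ⟨a + d * μ, (mem_foldSum_iff_sub_mem J μ d _).2 (by simpa using ha), b + μ, hb, ?_⟩
      push_cast at hab ⊢
      linarith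

/-- Below `N` only finitely many integers can ever enter `dA`, and all of them have entered
by some stage; from `N` on, every integer already lies in `A ⊆ dA`. -/
lemma foldSum_eventually_const (h0 : (0 : ℤ) ∈ A) (hA : ∀ a ∈ A, 0 ≤ a) {N : ℤ}
    (hN : ∀ z, N ≤ z → z ∈ A) : ∃ d₁, ∀ d, d₁ ≤ d → foldSum A d = foldSum A d₁ := by
  have hfin : ((⋃ d, foldSum A d) ∩ Set.Ico 0 N).Finite := (Set.finite_Ico 0 N).inter_of_right _
  obtain ⟨d₁, hd₁⟩ := (foldSum_monotone h0).directed_le.exists_mem_subset_of_finset_subset_biUnion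
    (s := hfin.toFinset) (by simp)
  refine ⟨d₁ + 1, fun d hd => (foldSum_monotone h0 hd).antisymm' fun x hx => ?_⟩
  rcases le_or_gt N x with hxN | hxN
  · exact subset_foldSum h0 (by omega) (hN x hxN)
  · refine foldSum_monotone h0 (Nat.le_succ d₁) (hd₁ ?_)
    simpa using ⟨⟨d, hx⟩, foldSum_nonneg hA d x hx, hxN⟩

end foldSum

/-- The colon set `(I − K)` of the paper. -/
def colon (I K : Set ℤ) : Set ℤ := {z | ∀ k ∈ K, z + k ∈ I}

section colon

variable {I K : Set ℤ}

lemma colon_subset (h0 : (0 : ℤ) ∈ K) : colon I K ⊆ I :=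
  fun z hz => by simpa using hz 0 h0

lemma mem_colon_of_ge {N z : ℤ} (hI : ∀ x, N ≤ x → x ∈ I) (hK : ∀ k ∈ K, 0 ≤ k) (hz : N ≤ z) :
    z ∈ colon I K :=
  fun k hk => hI _ (by linarith [hK k hk])

lemma add_mem_colon {m z : ℤ} (hK : ∀ k ∈ K, k + m ∈ K) (hz : z ∈ colon I K) :
    z + m ∈ colon I K :=
  fun k hk => by simpa [add_assoc, add_comm m] using hz _ (hK k hk)

lemma mem_colon_foldSum_iff (J : Set ℤ) (μ : ℤ) (d : ℕ) (z : ℤ) :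
    z ∈ colon I (foldSum J d) ↔ z + d * μ ∈ colon I (foldSum {y | y + μ ∈ J} d) := by
  constructor
  · intro hz t ht
    have := hz (t + d * μ) ((mem_foldSum_iff_sub_mem J μ d _).2 (by simpa using ht))
    rwa [add_comm t, ← add_assoc] at this
  · intro hz k hk
    simpa using hz _ ((mem_foldSum_iff_sub_mem J μ d k).1 hk)

end colon

def aperySet (U : Set ℤ) (m : ℤ) : Set ℤ := {u | u ∈ U ∧ u - m ∉ U}

section aperySet

variable {U : Set ℤ} {m : ℤ}

lemma mem_of_modEq_of_le (hm : 0 < m) (hUm : ∀ u ∈ U, u + m ∈ U) {u v : ℤ} (hu : u ∈ U)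
    (huv : u ≡ v [ZMOD m]) (hle : u ≤ v) : v ∈ U := by
  obtain ⟨c, hc⟩ := Int.modEq_iff_dvd.1 huv
  lift c to ℕ using by nlinarith
  have hmul : ∀ n : ℕ, u + n * m ∈ U := fun n => by
    induction n with
    | zero => simpa using hu
    | succ n ih => simpa [add_mul, ← add_assoc] using hUm _ ih
  rw [show v = u + c * m by linarith]
  exact hmul c

lemma aperySet_finite (hUb : BddBelow U) {B : ℤ} (hB : ∀ z, B ≤ z → z ∈ U) :
    (aperySet U m).Finite := by
  obtain ⟨L, hL⟩ := hUb
  refine (Set.finite_Ico L (B + m)).subset fun u ⟨hu, hum⟩ => ⟨hL hu, ?_⟩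
  by_contra h
  exact hum (hB _ (by linarith [not_lt.1 h]))

lemma injOn_emod_aperySet (hm : 0 < m) (hUm : ∀ u ∈ U, u + m ∈ U) :
    Set.InjOn (· % m) (aperySet U m) := by
  intro u hu v hv huv
  wlog hle : u ≤ v generalizing u v
  · exact (this hv hu huv.symm (le_of_not_ge hle)).symm
  refine hle.eq_or_lt.resolve_right fun hlt => hv.2 (mem_of_modEq_of_le hm hUm hu.1 ?_ ?_)
  · simpa [Int.ModEq] using huv
  · linarith [Int.le_of_dvd (sub_pos.2 hlt) (Int.ModEq.dvd huv)]

lemma surjOn_emod_aperySet (hm : 0 < m) (hUb : BddBelow U) {B : ℤ} (hB : ∀ z, B ≤ z → z ∈ U) :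
    Set.SurjOn (· % m) (aperySet U m) (Set.Ico 0 m) := by
  rintro r ⟨hr0, hrm⟩
  obtain ⟨L, hL⟩ := hUb
  have hne : ∃ z, z ∈ U ∧ z % m = r :=
    ⟨r + m * |B|, hB _ (by nlinarith [le_abs_self B, abs_nonneg B]),
      by simp [Int.emod_eq_of_lt hr0 hrm]⟩
  obtain ⟨u, ⟨hu, hur⟩, hmin⟩ := Int.exists_least_of_bdd ⟨L, fun z hz => hL hz.1⟩ hne
  refine ⟨u, ⟨hu, fun hum => ?_⟩, hur⟩
  have := hmin (u - m) ⟨hum, by simpa using hur⟩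
  omega

lemma aperySet_ncard (hm : 0 < m) (hUm : ∀ u ∈ U, u + m ∈ U) (hUb : BddBelow U) {B : ℤ}
    (hB : ∀ z, B ≤ z → z ∈ U) : ((aperySet U m).ncard : ℤ) = m := by
  have hbij : Set.BijOn (· % m) (aperySet U m) (Set.Ico 0 m) :=
    ⟨fun u _ => ⟨Int.emod_nonneg u hm.ne', Int.emod_lt_of_pos u hm⟩, injOn_emod_aperySet hm hUm,
      surjOn_emod_aperySet hm hUb hB⟩
  rw [hbij.ncard_eq, ← Finset.coe_Ico, Set.ncard_coe_finset, Int.card_Ico, sub_zero,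
    Int.toNat_of_nonneg hm.le]

end aperySet

lemma PFset_eq_preimage_aperySet {I J F : Set ℤ} {μ : ℤ} {d : ℕ} (hd : 0 < d)
    (hF : foldSum {y | y + μ ∈ J} d = F) (hF' : foldSum {y | y + μ ∈ J} (d - 1) = F) :
    PFset I J d = (· + d * μ) ⁻¹' aperySet (colon I F) μ := by
  ext z
  change z ∈ colon I _ ∧ z ∉ colon I _ ↔ _
  rw [mem_colon_foldSum_iff J μ, mem_colon_foldSum_iff J μ, hF, hF', Nat.cast_pred hd,
    show z + ((d : ℤ) - 1) * μ = z + d * μ - μ by ring]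
  rfl

/-- For ideals `I`, `J` of a numerical semigroup `S` with `J` proper, for all large
enough `d ≥ 1` the set `PF^d(I,J)` has exactly `μ(J) = min J` elements. -/
theorem stmt16 (S I J : Set ℤ) (hS : IsNumericalSemigroup S)
    (hI : IsIdealOf I S) (hJ : IsIdealOf J S) (hJproper : J ≠ S)
    (μ : ℤ) (hμ : IsLeast J μ) :
    ∃ d₀ : ℕ, 1 ≤ d₀ ∧ ∀ d : ℕ, d₀ ≤ d →
      (PFset I J d).Finite ∧ ((PFset I J d).ncard : ℤ) = μ := by
  obtain ⟨N, hN⟩ := hS.exists_forall_ge_mem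
  obtain ⟨NI, hNI⟩ := hI.exists_forall_ge_mem hS
  have hμ0 : 0 < μ :=
    (hJ.nonneg hS hμ.1).lt_of_ne fun h => hJproper (hJ.eq_of_zero_mem (h ▸ hμ.1))
  set J₀ : Set ℤ := {y | y + μ ∈ J}
  have h0 : (0 : ℤ) ∈ J₀ := by simpa [J₀] using hμ.1
  have hJ₀_nonneg : ∀ y ∈ J₀, 0 ≤ y := fun y hy => by linarith [hμ.2 hy]
  have hNJ₀ : ∀ y, N ≤ y → y ∈ J₀ := fun y hy => by
    simpa [J₀, add_comm] using hJ.2.2 μ hμ.1 y (hN y hy)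
  obtain ⟨d₁, hd₁⟩ := foldSum_eventually_const h0 hJ₀_nonneg hNJ₀
  set F := foldSum J₀ d₁
  have hFμ : ∀ t ∈ F, t + μ ∈ F := fun t ht =>
    hd₁ (d₁ + 1) d₁.le_succ ▸ ⟨t, ht, μ, hJ.2.2 μ hμ.1 μ (hJ.2.1 hμ.1), rfl⟩
  have hU_bdd : BddBelow (colon I F) :=
    ⟨0, fun u hu => hI.nonneg hS (colon_subset (zero_mem_foldSum h0 d₁) hu)⟩
  have hU_ge : ∀ z, NI ≤ z → z ∈ colon I F := fun _ =>
    mem_colon_of_ge hNI (foldSum_nonneg hJ₀_nonneg d₁)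
  refine ⟨d₁ + 1, d₁.succ_pos, fun d hd => ?_⟩
  rw [PFset_eq_preimage_aperySet (by omega) (hd₁ d (by omega)) (hd₁ (d - 1) (by omega)),
    Set.ncard_preimage_of_injective_subset_range (add_left_injective _)
      fun x _ => ⟨x - d * μ, sub_add_cancel x _⟩]
  exact ⟨(aperySet_finite hU_bdd hU_ge).preimage (add_left_injective _).injOn,
    aperySet_ncard hμ0 (fun u => add_mem_colon hFμ) hU_bdd hU_ge⟩
end

section
/- Let S be a numerical semigroup and let d ≥ 2 be an integer. Then there exist infinitely many numerical semigroups T such that S = T/d = {x ∈ ℤ₊ : dx ∈ T}; moreover, such T can all be taken of the form T = p(S) = {a₁s₁ + a₂s₂ : s₁, s₂ ∈ S, s₁ ≥ s₂} for linear patterns p(X₁,X₂) = a₁X₁ + a₂X₂ with a₁ + a₂ = d, a₁ ∈ S and gcd(a₁, a₂) = 1. -/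
open Finset

/-!
For `a ∈ S` coprime to `d`, the elements of `T = {a s₁ + (d - a) s₂ : s₂ ≤ s₁ in S}` are
`a (s₁ - s₂) + d s₂`. If `d x ∈ T` then `d ∣ a (s₁ - s₂)`, so `s₁ - s₂ = d k` and
`x = k a + s₂ ∈ S`: hence `T / d = S`. Every large integer is `a x + d y` with `x`, `y` beyond
the conductor of `S`, so `T` has finite complement. The elements of `T` not divisible by `d`
are at least `a`, while `a + d c = a (c + 1) + (d - a) c ∈ T` for `c` beyond the conductor;
so values `a ≡ 1 (mod d)` spaced more than `d c` apart give pairwise distinct `T`.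
-/

namespace IsNumericalSemigroup

variable {S : Set ℤ}

theorem zero_mem (hS : IsNumericalSemigroup S) : (0 : ℤ) ∈ S := hS.1

theorem nonneg (hS : IsNumericalSemigroup S) {s : ℤ} (hs : s ∈ S) : 0 ≤ s := hS.2.1 s hs

theorem add_mem (hS : IsNumericalSemigroup S) {s t : ℤ} (hs : s ∈ S) (ht : t ∈ S) :
    s + t ∈ S :=
  hS.2.2.1 s hs t ht

theorem mul_mem (hS : IsNumericalSemigroup S) {k a : ℤ} (hk : 0 ≤ k) (ha : a ∈ S) :
    k * a ∈ S := by
  lift k to ℕ using hk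
  induction k with
  | zero => simpa using hS.zero_mem
  | succ n ih => simpa [add_mul] using hS.add_mem ih ha

theorem exists_forall_ge_mem_s19 (hS : IsNumericalSemigroup S) :
    ∃ c : ℤ, 0 ≤ c ∧ ∀ z, c ≤ z → z ∈ S := by
  obtain ⟨b, hb⟩ := hS.2.2.2.bddAbove
  refine ⟨max b 0 + 1, by omega, fun z hz => ?_⟩
  by_contra hzS
  have : z ≤ b := hb ⟨by omega, hzS⟩
  omega

end IsNumericalSemigroup

theorem Int.exists_eq_mul_add_mul_of_isCoprime {a d c z : ℤ} (hd : 0 < d) (ha : 0 ≤ a)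
    (hcop : IsCoprime a d) (hz : a * (c + d) + d * c ≤ z) :
    ∃ x y, c ≤ x ∧ c ≤ y ∧ z = a * x + d * y := by
  obtain ⟨u, v, huv⟩ := hcop
  have hdiv := Int.emod_add_mul_ediv (u * z - c) d
  have hr₀ := Int.emod_nonneg (u * z - c) hd.ne'
  have hr₁ := Int.emod_lt_of_pos (u * z - c) hd
  set r := (u * z - c) % d
  set y := v * z + a * ((u * z - c) / d)
  have hz_eq : z = a * (c + r) + d * y := by linear_combination (-a) * hdiv - z * huv
  refine ⟨c + r, y, by omega, ?_, hz_eq⟩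
  -- `d y = z - a (c + r) ≥ z - a (c + d) ≥ d c`
  have : d * c ≤ d * y := by nlinarith
  exact le_of_mul_le_mul_left this hd

def twoPatternImage (S : Set ℤ) (a₁ a₂ : ℤ) : Set ℤ :=
  {y : ℤ | ∃ s₁ ∈ S, ∃ s₂ ∈ S, s₂ ≤ s₁ ∧ y = a₁ * s₁ + a₂ * s₂}

section twoPatternImage

variable {S : Set ℤ} {a d : ℤ}

theorem mul_mem_twoPatternImage {x : ℤ} (hx : x ∈ S) : d * x ∈ twoPatternImage S a (d - a) :=
  ⟨x, hx, x, hx, le_rfl, by ring⟩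

theorem add_mul_mem_twoPatternImage {c : ℤ} (hc : c ∈ S) (hc₁ : c + 1 ∈ S) :
    a + d * c ∈ twoPatternImage S a (d - a) :=
  ⟨c + 1, hc₁, c, hc, by omega, by ring⟩

theorem le_of_mem_twoPatternImage (hS : IsNumericalSemigroup S) (hd : 0 ≤ d) (ha : 0 ≤ a)
    {y : ℤ} (hy : y ∈ twoPatternImage S a (d - a)) (hdy : ¬ d ∣ y) : a ≤ y := by
  obtain ⟨s₁, -, s₂, hs₂, hle, rfl⟩ := hy
  rcases hle.lt_or_eq with hlt | heq
  · nlinarith [hS.nonneg hs₂]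
  · exact absurd ⟨s₂, by rw [heq]; ring⟩ hdy

theorem isNumericalSemigroup_twoPatternImage (hS : IsNumericalSemigroup S) (hd : 0 < d)
    (ha : 0 ≤ a) (hcop : IsCoprime a d) : IsNumericalSemigroup (twoPatternImage S a (d - a)) := by
  obtain ⟨c, hc, hcS⟩ := hS.exists_forall_ge_mem_s19
  refine ⟨by simpa using mul_mem_twoPatternImage (d := d) (a := a) hS.zero_mem, ?_, ?_, ?_⟩
  · rintro y ⟨s₁, -, s₂, hs₂, hle, rfl⟩
    nlinarith [hS.nonneg hs₂]
  · rintro y ⟨s₁, hs₁, s₂, hs₂, hle, rfl⟩ y' ⟨t₁, ht₁, t₂, ht₂, hle', rfl⟩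
    exact ⟨s₁ + t₁, hS.add_mem hs₁ ht₁, s₂ + t₂, hS.add_mem hs₂ ht₂, by omega, by ring⟩
  · refine (Set.finite_Ico 0 (a * (c + d) + d * c)).subset fun z ⟨hz₀, hzT⟩ => ⟨hz₀, ?_⟩
    by_contra! hz
    obtain ⟨x, y, hx, hy, rfl⟩ := Int.exists_eq_mul_add_mul_of_isCoprime hd ha hcop hz
    exact hzT ⟨x + y, hcS _ (by omega), y, hcS _ hy, by omega, by ring⟩

theorem quotient_twoPatternImage (hS : IsNumericalSemigroup S) (hd : 0 < d) (ha : a ∈ S)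
    (hcop : IsCoprime a d) : {x : ℤ | 0 ≤ x ∧ d * x ∈ twoPatternImage S a (d - a)} = S := by
  ext x
  refine ⟨?_, fun hx => ⟨hS.nonneg hx, mul_mem_twoPatternImage hx⟩⟩
  rintro ⟨-, s₁, -, s₂, hs₂, hle, heq⟩
  obtain ⟨k, hk⟩ : d ∣ s₁ - s₂ :=
    hcop.symm.dvd_of_dvd_mul_left ⟨x - s₂, by linear_combination -heq⟩
  have hk₀ : 0 ≤ k := by nlinarith
  have hx : x = k * a + s₂ := by
    have : d * (x - (k * a + s₂)) = 0 := by linear_combination heq + a * hk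
    linarith [(mul_eq_zero.mp this).resolve_left hd.ne']
  exact hx ▸ hS.add_mem (hS.mul_mem hk₀ ha) hs₂

theorem twoPatternImage_ne (hS : IsNumericalSemigroup S) (hd : 1 < d) (hcop : IsCoprime a d)
    {b c : ℤ} (hb : 0 ≤ b) (hc : c ∈ S) (hc₁ : c + 1 ∈ S) (hab : a + d * c < b) :
    twoPatternImage S a (d - a) ≠ twoPatternImage S b (d - b) := by
  intro h
  have hmem : a + d * c ∈ twoPatternImage S b (d - b) := h ▸ add_mul_mem_twoPatternImage hc hc₁
  have hndvd : ¬ d ∣ a + d * c := fun hdvd => by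
    have hunit := hcop.isUnit_of_dvd' ((dvd_add_left (dvd_mul_right d c)).mp hdvd) dvd_rfl
    rcases Int.isUnit_iff.mp hunit with h | h <;> omega
  linarith [le_of_mem_twoPatternImage hS (by omega) hb hmem hndvd]

end twoPatternImage

/-- Every numerical semigroup `S` is, for every integer `d ≥ 2`, the quotient by `d`
of infinitely many numerical semigroups, all of the form `p(S)` for linear patterns
`p(X₁,X₂) = a₁X₁ + a₂X₂` of length two with `a₁ + a₂ = d`, `a₁ ∈ S`, `gcd(a₁,a₂) = 1`. -/
theorem stmt19 (S : Set ℤ) (hS : IsNumericalSemigroup S) (d : ℤ) (hd : 2 ≤ d) :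
    {T : Set ℤ | IsNumericalSemigroup T ∧ {x : ℤ | 0 ≤ x ∧ d * x ∈ T} = S ∧
      ∃ a₁ a₂ : ℤ, a₁ + a₂ = d ∧ a₁ ∈ S ∧ Int.gcd a₁ a₂ = 1 ∧
        T = {y : ℤ | ∃ s₁ ∈ S, ∃ s₂ ∈ S, s₂ ≤ s₁ ∧ y = a₁ * s₁ + a₂ * s₂}}.Infinite := by
  obtain ⟨c, hc, hcS⟩ := hS.exists_forall_ge_mem_s19
  set a : ℕ → ℤ := fun n => 1 + d * (c + 1) * (n + 1) with ha
  have ha_ge : ∀ n, c ≤ a n := fun n => by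
    have : 0 ≤ d * (c + 1) * n := by positivity
    simp only [ha]
    nlinarith
  have ha_cop : ∀ n, IsCoprime (a n) d := fun n => ⟨1, -((c + 1) * (n + 1)), by ring⟩
  have ha_gap : ∀ n m : ℕ, n < m → a n + d * c < a m := fun n m hnm => by
    have : (n : ℤ) + 1 ≤ m := by exact_mod_cast hnm
    have : 0 ≤ d * (c + 1) * (m - n - 1) := mul_nonneg (by positivity) (by linarith)
    simp only [ha]
    nlinarith
  refine Set.infinite_of_injective_forall_mem
    (f := fun n => twoPatternImage S (a n) (d - a n)) ?_ fun n => ?_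
  · exact .of_lt_imp_ne fun n m hnm => twoPatternImage_ne hS (by omega) (ha_cop n)
      (by linarith [ha_ge m]) (hcS c le_rfl) (hcS _ (by omega)) (ha_gap n m hnm)
  · have hgcd : Int.gcd (a n) (d - a n) = 1 := Int.isCoprime_iff_gcd_eq_one.mp
      (by simpa using (IsCoprime.sub_mul_right_right_iff (z := 1)).mpr (ha_cop n))
    exact ⟨isNumericalSemigroup_twoPatternImage hS (by omega) (by linarith [ha_ge n]) (ha_cop n),
      quotient_twoPatternImage hS (by omega) (hcS _ (ha_ge n)) (ha_cop n),
      a n, d - a n, add_sub_cancel _ _, hcS _ (ha_ge n), hgcd, rfl⟩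
end
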